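/- arXiv:2011.10564 — 2 statements merged into one kernel-verified Lean document; each statement's English description precedes it below -/
import Mathlib

section
/- Williamson's theorem: For every positive definite real (2n)×(2n) matrix M there exist a real symplectic matrix S (i.e. Sᵀ Ω S = Ω) and a diagonal real n×n matrix Λ with strictly positive diagonal entries such that Sᵀ M S equals the block-diagonal matrix diag(Λ, Λ) (upper-left block Λ, lower-right block Λ, off-diagonal blocks zero). -/
open Matrix

/-- The standard `(2n)×(2n)` symplectic form `Ω = [[0, Iₙ], [−Iₙ, 0]]`. -/
def symplecticForm (n : ℕ) : Matrix (Fin n ⊕ Fin n) (Fin n ⊕ Fin n) ℝ :=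
  Matrix.fromBlocks 0 1 (-1) 0

/-!
Let `R = M^{-1/2}`, so that `Rᵀ M R = 1`. The matrix `K = Rᵀ Ω R` is skew-symmetric and
invertible, so an orthogonal `Q` brings it to the normal form `[[0, D], [−D, 0]]` with `D`
positive diagonal: a unit eigenvector `u` of the symmetric operator `K²` spans with `K u` a
`K`-invariant plane whose orthogonal complement is again `K`-invariant, and one inducts on the
dimension. Rescaling both blocks by `D^{-1/2}` turns this normal form into `Ω` and `Qᵀ Q = 1`
into `diag(D⁻¹, D⁻¹)`, so `S = R Q diag(D^{-1/2}, D^{-1/2})` works with `Λ = D⁻¹`.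
-/

open Module RealInnerProductSpace

section Orthonormal

variable {𝕜 E ι κ : Type*} [RCLike 𝕜] [NormedAddCommGroup E] [InnerProductSpace 𝕜 E]

theorem Orthonormal.sumElim {f : ι → E} {g : κ → E} (hf : Orthonormal 𝕜 f)
    (hg : Orthonormal 𝕜 g) (hfg : ∀ i j, inner 𝕜 (f i) (g j) = 0) :
    Orthonormal 𝕜 (Sum.elim f g) := by
  refine ⟨Sum.rec hf.1 hg.1, ?_⟩
  rintro (i | i) (j | j) hij
  · exact hf.2 (by simpa using hij)
  · exact hfg i j
  · exact inner_eq_zero_symm.mp (hfg j i)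
  · exact hg.2 (by simpa using hij)

theorem Orthonormal.cons {N : ℕ} {f : Fin N → E} (hf : Orthonormal 𝕜 f) {x : E} (hx : ‖x‖ = 1)
    (hxf : ∀ i, inner 𝕜 x (f i) = 0) : Orthonormal 𝕜 (Fin.cons x f : Fin (N + 1) → E) := by
  refine ⟨Fin.cases hx hf.1, ?_⟩
  intro i j hij
  cases i using Fin.cases <;> cases j using Fin.cases
  · exact absurd rfl hij
  · exact hxf _
  · exact inner_eq_zero_symm.mp (hxf _)
  · exact hf.2 (by simpa using hij)

end Orthonormal

section SkewOperator

variable {E : Type*} [NormedAddCommGroup E] [InnerProductSpace ℝ E] {K : E →ₗ[ℝ] E}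

theorem inner_apply_self_eq_zero_of_skew (hK : ∀ x y, ⟪K x, y⟫ = -⟪x, K y⟫) (x : E) :
    ⟪x, K x⟫ = 0 := by
  have := hK x x
  rw [real_inner_comm] at this
  linarith

theorem isSymmetric_comp_self_of_skew (hK : ∀ x y, ⟪K x, y⟫ = -⟪x, K y⟫) :
    (K ∘ₗ K).IsSymmetric := fun x y => by
  rw [LinearMap.comp_apply, LinearMap.comp_apply, hK, hK, neg_neg]

theorem Submodule.orthogonal_le_comap_of_skew (hK : ∀ x y, ⟪K x, y⟫ = -⟪x, K y⟫)
    {V : Submodule ℝ E} (hV : V ≤ V.comap K) : Vᗮ ≤ Vᗮ.comap K := fun w hw z hz => by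
  rw [← neg_eq_zero, ← hK]
  exact Submodule.inner_right_of_mem_orthogonal (Submodule.mem_comap.mp (hV hz)) hw

theorem exists_orthonormal_pair_of_skew [FiniteDimensional ℝ E] [Nontrivial E]
    (hK : ∀ x y, ⟪K x, y⟫ = -⟪x, K y⟫) (hinj : Function.Injective K) :
    ∃ d : ℝ, 0 < d ∧ ∃ u v : E, Orthonormal ℝ ![u, v] ∧ K u = d • v ∧ K v = -(d • u) := by
  obtain ⟨μ, hμ⟩ : ∃ μ : ℝ, End.HasEigenvalue (K ∘ₗ K) μ :=
    ⟨_, (isSymmetric_comp_self_of_skew hK).hasEigenvalue_iSup_of_finiteDimensional⟩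
  obtain ⟨x, hx⟩ := hμ.exists_hasEigenvector
  set u := ‖x‖⁻¹ • x
  have hu : ‖u‖ = 1 := norm_smul_inv_norm hx.2
  have hKKu : K (K u) = μ • u := by
    simpa [u, smul_comm μ] using congrArg (‖x‖⁻¹ • ·) hx.apply_eq_smul
  set d := ‖K u‖
  have hu0 : u ≠ 0 := by
    rintro h
    simp [h] at hu
  have hd : 0 < d := norm_pos_iff.mpr ((map_ne_zero_iff K hinj).mpr hu0)
  have hμd : μ = -d ^ 2 := by
    rw [← real_inner_self_eq_norm_sq, hK, hKKu, real_inner_smul_right,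
      real_inner_self_eq_norm_sq, hu]
    ring
  refine ⟨d, hd, u, d⁻¹ • K u, ?_, by rw [smul_inv_smul₀ hd.ne'], ?_⟩
  · have hv : ‖d⁻¹ • K u‖ = 1 := by
      rw [norm_smul, norm_inv, Real.norm_of_nonneg hd.le, inv_mul_cancel₀ hd.ne']
    have huv : ⟪u, d⁻¹ • K u⟫ = 0 := by
      rw [real_inner_smul_right, inner_apply_self_eq_zero_of_skew hK, mul_zero]
    refine ⟨fun i => by fin_cases i <;> simpa, fun i j hij => ?_⟩
    fin_cases i <;> fin_cases j <;> simp_all [real_inner_comm]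
  · rw [map_smul, hKKu, hμd, smul_smul, ← neg_smul]
    congr 1
    field_simp

theorem exists_orthonormal_skew_normal_form [FiniteDimensional ℝ E]
    (hK : ∀ x y, ⟪K x, y⟫ = -⟪x, K y⟫) (hinj : Function.Injective K) :
    ∃ (N : ℕ) (d : Fin N → ℝ) (b : Fin N ⊕ Fin N → E), 2 * N = finrank ℝ E ∧
      Orthonormal ℝ b ∧ (∀ i, 0 < d i) ∧
      (∀ i, K (b (.inl i)) = -(d i • b (.inr i))) ∧ ∀ i, K (b (.inr i)) = d i • b (.inl i) := by
  induction hn : finrank ℝ E using Nat.strong_induction_on generalizing E with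
  | _ m ih =>
  rcases subsingleton_or_nontrivial E with hE | hE
  · refine ⟨0, Fin.elim0, Sum.elim Fin.elim0 Fin.elim0, by rw [← hn, finrank_zero_of_subsingleton],
      ⟨fun i => isEmptyElim i, fun i => isEmptyElim i⟩, Fin.rec0, Fin.rec0, Fin.rec0⟩
  obtain ⟨d₀, hd₀, u, v, huv, hKu, hKv⟩ := exists_orthonormal_pair_of_skew hK hinj
  set V := Submodule.span ℝ (Set.range ![u, v])
  have hV : V ≤ V.comap K := by
    refine Submodule.span_le.mpr (Set.range_subset_iff.mpr fun i => ?_)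
    fin_cases i
    · simpa [hKu] using Submodule.smul_mem V d₀ (Submodule.subset_span ⟨1, rfl⟩)
    · simpa [hKv] using Submodule.smul_mem V (-d₀) (Submodule.subset_span ⟨0, rfl⟩)
  have hW : ∀ x ∈ Vᗮ, K x ∈ Vᗮ := fun _ hx => Submodule.orthogonal_le_comap_of_skew hK hV hx
  have hWdim : 2 + finrank ℝ Vᗮ = m := by
    rw [← hn, ← V.finrank_add_finrank_orthogonal, finrank_span_eq_card huv.linearIndependent]
    simp
  have hKW : ∀ x y : Vᗮ, ⟪K.restrict hW x, y⟫ = -⟪x, K.restrict hW y⟫ := fun x y => hK x y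
  have hinjW : Function.Injective (K.restrict hW) := fun x y h =>
    Subtype.ext (hinj (congrArg Subtype.val h))
  obtain ⟨N, d, b, hN, hb, hd, hbl, hbr⟩ := ih _ (by omega) hKW hinjW rfl
  have hc : Orthonormal ℝ fun a => (b a : E) := hb.comp_linearIsometry Vᗮ.subtypeₗᵢ
  have huV : u ∈ V := Submodule.subset_span (Set.mem_range_self (0 : Fin 2))
  have hvV : v ∈ V := Submodule.subset_span (Set.mem_range_self (1 : Fin 2))
  refine ⟨N + 1, Fin.cons d₀ d,
    Sum.elim (Fin.cons v fun i => (b (.inl i) : E)) (Fin.cons u fun i => (b (.inr i) : E)),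
    by omega, ?_, Fin.cases hd₀ hd, Fin.cases ?_ fun i => ?_, Fin.cases ?_ fun i => ?_⟩
  · have hu : ‖u‖ = 1 := by simpa using huv.1 0
    have hv : ‖v‖ = 1 := by simpa using huv.1 1
    refine ((hc.comp _ Sum.inl_injective).cons hv fun i =>
      Submodule.inner_right_of_mem_orthogonal hvV (b _).2).sumElim
      ((hc.comp _ Sum.inr_injective).cons hu fun i =>
      Submodule.inner_right_of_mem_orthogonal huV (b _).2) fun i j => ?_
    cases i using Fin.cases <;> cases j using Fin.cases
    · simpa [real_inner_comm] using huv.2 (show (0 : Fin 2) ≠ 1 by decide)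
    · exact Submodule.inner_right_of_mem_orthogonal hvV (b _).2
    · exact Submodule.inner_left_of_mem_orthogonal huV (b _).2
    · exact hc.2 Sum.inl_ne_inr
  · simpa using hKv
  · simpa using congrArg Subtype.val (hbl i)
  · simpa using hKu
  · simpa using congrArg Subtype.val (hbr i)

end SkewOperator

section Matrix

variable {ι κ : Type*} [Fintype ι] [DecidableEq ι]

theorem Matrix.inner_toEuclideanLin_of_transpose_eq_neg {K : Matrix ι ι ℝ} (hK : Kᵀ = -K)
    (x y : EuclideanSpace ℝ ι) : ⟪K.toEuclideanLin x, y⟫ = -⟪x, K.toEuclideanLin y⟫ := by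
  rw [← LinearMap.adjoint_inner_right, ← toEuclideanLin_conjTranspose_eq_adjoint,
    conjTranspose_eq_transpose_of_trivial, hK, map_neg, LinearMap.neg_apply, inner_neg_right]

theorem Matrix.transpose_mul_mul_of_cols_apply (A : Matrix ι ι ℝ)
    (b : κ → EuclideanSpace ℝ ι) (j k : κ) :
    ((of fun i k => b k i)ᵀ * A * of fun i k => b k i) j k = ⟪b j, A.toEuclideanLin (b k)⟫ := by
  rw [Matrix.mul_assoc]
  simp [mul_apply, EuclideanSpace.inner_eq_star_dotProduct, dotProduct, mulVec, mul_comm]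

theorem Matrix.exists_orthogonal_skew_normal_form {K : Matrix ι ι ℝ} (hK : Kᵀ = -K)
    (hKu : IsUnit K) :
    ∃ (N : ℕ) (Q : Matrix ι (Fin N ⊕ Fin N) ℝ) (d : Fin N → ℝ), 2 * N = Fintype.card ι ∧
      Qᵀ * Q = 1 ∧ (∀ i, 0 < d i) ∧ Qᵀ * K * Q = fromBlocks 0 (diagonal d) (-diagonal d) 0 := by
  have hinj : Function.Injective K.toEuclideanLin := fun x y h => WithLp.ofLp_injective 2 <|
    mulVec_injective_iff_isUnit.mpr hKu (by simpa using congrArg WithLp.ofLp h)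
  obtain ⟨N, d, b, hN, hb, hd, hbl, hbr⟩ := exists_orthonormal_skew_normal_form
    (inner_toEuclideanLin_of_transpose_eq_neg hK) hinj
  refine ⟨N, of fun i k => b k i, d, by simpa using hN, ?_, hd, ?_⟩
  · ext j k
    rw [← Matrix.mul_one (of fun i k => b k i)ᵀ, transpose_mul_mul_of_cols_apply]
    simpa [one_apply] using orthonormal_iff_ite.mp hb j k
  · ext (j | j) (k | k) <;>
      simp +contextual [transpose_mul_mul_of_cols_apply, hbl, hbr, inner_smul_right,
        orthonormal_iff_ite.mp hb, diagonal_apply, apply_ite]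

end Matrix

theorem Matrix.PosDef.exists_transpose_mul_mul_eq_one {ι : Type*} [Fintype ι] [DecidableEq ι]
    {M : Matrix ι ι ℝ} (hM : M.PosDef) : ∃ R : Matrix ι ι ℝ, Rᵀ * M * R = 1 := by
  open scoped MatrixOrder in
  obtain ⟨B, hBT, hBB⟩ : ∃ B : Matrix ι ι ℝ, Bᵀ = B ∧ B * B = M :=
    ⟨CFC.sqrt M, (conjTranspose_eq_transpose_of_trivial _).symm.trans
      (CFC.sqrt_nonneg M).isSelfAdjoint, CFC.sqrt_mul_sqrt_self M hM.posSemidef.nonneg⟩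
  have hB : IsUnit B := isUnit_of_mul_isUnit_left (hBB ▸ hM.isUnit)
  refine ⟨B⁻¹, ?_⟩
  have hdet := (isUnit_iff_isUnit_det B).mp hB
  rw [transpose_nonsing_inv, hBT, ← hBB, ← Matrix.mul_assoc, nonsing_inv_mul _ hdet,
    Matrix.one_mul, mul_nonsing_inv _ hdet]

theorem symplecticForm_eq_neg_J (n : ℕ) : symplecticForm n = -J (Fin n) ℝ := by
  simp [symplecticForm, J, fromBlocks_neg]

theorem symplecticForm_transpose (n : ℕ) : (symplecticForm n)ᵀ = -symplecticForm n := by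
  rw [symplecticForm_eq_neg_J, transpose_neg, J_transpose]

theorem isUnit_symplecticForm (n : ℕ) : IsUnit (symplecticForm n) := by
  rw [symplecticForm_eq_neg_J]
  exact ((isUnit_iff_isUnit_det _).mpr (isUnit_det_J _ _)).neg

theorem exists_transpose_mul_fromBlocks_diagonal_mul_eq_symplecticForm {n : ℕ} {d : Fin n → ℝ}
    (hd : ∀ i, 0 < d i) : ∃ F : Matrix (Fin n ⊕ Fin n) (Fin n ⊕ Fin n) ℝ,
      Fᵀ * fromBlocks 0 (diagonal d) (-diagonal d) 0 * F = symplecticForm n ∧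
      Fᵀ * F = fromBlocks (diagonal d⁻¹) 0 0 (diagonal d⁻¹) := by
  set e : Fin n → ℝ := fun i => √(d i)⁻¹
  have he : ∀ i, e i * e i = (d i)⁻¹ := fun i => Real.mul_self_sqrt (inv_pos.mpr (hd i)).le
  have hede : ∀ i, e i * d i * e i = 1 := fun i => by
    rw [mul_right_comm, he, inv_mul_cancel₀ (hd i).ne']
  refine ⟨fromBlocks (diagonal e) 0 0 (diagonal e), ?_, ?_⟩
  · rw [fromBlocks_transpose, fromBlocks_multiply, fromBlocks_multiply]
    simp [symplecticForm, diagonal_mul_diagonal, hede, -diagonal_neg]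
  · rw [fromBlocks_transpose, fromBlocks_multiply]
    simp [diagonal_mul_diagonal, he]

/-- **Williamson's theorem**: every positive definite real `(2n)×(2n)` matrix `M` can be
brought to the form `diag(Λ, Λ)` with `Λ` diagonal with positive entries, by a congruence
`Sᵀ M S` with `S` symplectic. -/
theorem williamson (n : ℕ) (M : Matrix (Fin n ⊕ Fin n) (Fin n ⊕ Fin n) ℝ) (hM : M.PosDef) :
    ∃ (S : Matrix (Fin n ⊕ Fin n) (Fin n ⊕ Fin n) ℝ) (Λ : Matrix (Fin n) (Fin n) ℝ),
      Sᵀ * symplecticForm n * S = symplecticForm n ∧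
      Λ.IsDiag ∧ (∀ i, 0 < Λ i i) ∧
      Sᵀ * M * S = Matrix.fromBlocks Λ 0 0 Λ := by
  obtain ⟨R, hR⟩ := hM.exists_transpose_mul_mul_eq_one
  have hRu : IsUnit R := (isUnit_iff_isUnit_det R).mpr (isUnit_det_of_left_inverse hR)
  obtain ⟨N, Q, d, hN, hQ, hd, hK⟩ := exists_orthogonal_skew_normal_form
    (K := Rᵀ * symplecticForm n * R)
    (by simp [transpose_mul, symplecticForm_transpose, Matrix.mul_assoc])
    (((isUnit_transpose R).mpr hRu |>.mul (isUnit_symplecticForm n)).mul hRu)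
  obtain rfl : N = n := by simp only [Fintype.card_sum, Fintype.card_fin] at hN; omega
  obtain ⟨F, hFΩ, hFF⟩ := exists_transpose_mul_fromBlocks_diagonal_mul_eq_symplecticForm hd
  have hS : ∀ X, (R * Q * F)ᵀ * X * (R * Q * F) = Fᵀ * (Qᵀ * (Rᵀ * X * R) * Q) * F := fun X => by
    simp only [transpose_mul, Matrix.mul_assoc]
  refine ⟨R * Q * F, diagonal d⁻¹, ?_, isDiag_diagonal _, fun i => by simpa using hd i, ?_⟩
  · rw [hS, hK, hFΩ]
  · rw [hS, hR, Matrix.mul_one, hQ, Matrix.mul_one, hFF]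
end

section
/- Block-diagonal Williamson theorem: If M is a positive definite real (2n)×(2n) matrix that is block diagonal with two n×n blocks, M = diag(A, B), then there exist an invertible real n×n matrix Sₙ and a diagonal real n×n matrix Λ with strictly positive diagonal entries such that the block-diagonal matrix S = diag(Sₙ, (Sₙᵀ)⁻¹) is symplectic (Sᵀ Ω S = Ω) and Sᵀ M S = diag(Λ, Λ). -/
/-!
Write `A = L²` with `L = √A` and diagonalize the positive definite matrix `L B L = U E Uᵀ`
orthogonally. Then `S = L⁻¹ U E^{1/4}` satisfies `Sᵀ A S = E^{1/2}` and `S E^{1/2} Sᵀ = B`, i.e.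
`S⁻¹ B S⁻ᵀ = E^{1/2}`; and `diag(S, S⁻ᵀ)` is symplectic for every invertible `S`.
-/

open Matrix

namespace Matrix

lemma PosDef.toBlocks₁₁ {m n R : Type*} [Fintype m] [Fintype n] [Ring R] [PartialOrder R]
    [StarRing R] {M : Matrix (m ⊕ n) (m ⊕ n) R} (hM : M.PosDef) : M.toBlocks₁₁.PosDef :=
  hM.submatrix Sum.inl_injective

lemma PosDef.toBlocks₂₂ {m n R : Type*} [Fintype m] [Fintype n] [Ring R] [PartialOrder R]
    [StarRing R] {M : Matrix (m ⊕ n) (m ⊕ n) R} (hM : M.PosDef) : M.toBlocks₂₂.PosDef :=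
  hM.submatrix Sum.inr_injective

lemma fromBlocks_transpose_mul_fromBlocks_mul_fromBlocks {m n R : Type*} [Fintype m] [Fintype n]
    [CommSemiring R] (S A : Matrix m m R) (X B : Matrix n n R) :
    (fromBlocks S 0 0 X)ᵀ * fromBlocks A 0 0 B * fromBlocks S 0 0 X =
      fromBlocks (Sᵀ * A * S) 0 0 (Xᵀ * B * X) := by
  simp [fromBlocks_transpose, fromBlocks_multiply]

variable {ι : Type*} [Fintype ι] [DecidableEq ι]

open scoped MatrixOrder in
lemma PosDef.exists_isUnit_symm_mul_self_eq {A : Matrix ι ι ℝ} (hA : A.PosDef) :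
    ∃ L : Matrix ι ι ℝ, IsUnit L ∧ Lᵀ = L ∧ L * L = A :=
  ⟨CFC.sqrt A, (CFC.isUnit_sqrt_iff A hA.posSemidef.nonneg).2 hA.isUnit,
    (CFC.sqrt_nonneg A).posSemidef.1, CFC.sqrt_mul_sqrt_self A hA.posSemidef.nonneg⟩

lemma PosDef.exists_orthogonal_diagonal {T : Matrix ι ι ℝ} (hT : T.PosDef) :
    ∃ (U : Matrix ι ι ℝ) (e : ι → ℝ), U * Uᵀ = 1 ∧ Uᵀ * U = 1 ∧ (∀ i, 0 < e i) ∧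
      T = U * diagonal e * Uᵀ := by
  have hU := hT.1.eigenvectorUnitary.2
  refine ⟨_, _, mem_unitaryGroup_iff.1 hU, mem_unitaryGroup_iff'.1 hU, hT.eigenvalues_pos, ?_⟩
  simpa [Unitary.conjStarAlgAut_apply, star_eq_conjTranspose,
    conjTranspose_eq_transpose_of_trivial] using hT.1.spectral_theorem

lemma PosDef.exists_simultaneous_diagonalization {A B : Matrix ι ι ℝ} (hA : A.PosDef)
    (hB : B.PosDef) :
    ∃ (S : Matrix ι ι ℝ) (μ : ι → ℝ), IsUnit S ∧ (∀ i, 0 < μ i) ∧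
      Sᵀ * A * S = diagonal μ ∧ S * diagonal μ * Sᵀ = B := by
  obtain ⟨L, hL, hLt, rfl⟩ := hA.exists_isUnit_symm_mul_self_eq
  have hLdet := (isUnit_iff_isUnit_det L).1 hL
  have hT : (L * B * L).PosDef := by
    simpa [conjTranspose_eq_transpose_of_trivial, hLt] using
      hB.conjTranspose_mul_mul_same (mulVec_injective_of_isUnit hL)
  obtain ⟨U, e, hUUt, hUtU, he, hTU⟩ := hT.exists_orthogonal_diagonal
  have hUtU' : ∀ X : Matrix ι ι ℝ, Uᵀ * (U * X) = X := fun X => by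
    rw [← Matrix.mul_assoc, hUtU, Matrix.one_mul]
  set D := diagonal fun i => √(√(e i))
  have hDD : D * D = diagonal fun i => √(e i) := by
    simp [D, diagonal_mul_diagonal]
  have hDDDD : D * D * (D * D) = diagonal e := by
    simp [hDD, diagonal_mul_diagonal, (he _).le]
  have hSt : (L⁻¹ * U * D)ᵀ = D * Uᵀ * L⁻¹ := by
    rw [transpose_mul, transpose_mul, transpose_nonsing_inv, hLt, diagonal_transpose,
      Matrix.mul_assoc]
  refine ⟨L⁻¹ * U * D, fun i => √(e i), ?_, fun i => Real.sqrt_pos.2 (he i), ?_, ?_⟩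
  · exact ((isUnit_nonsing_inv_iff.2 hL).mul
      ((isUnit_iff_isUnit_det U).2 (isUnit_det_of_right_inverse hUUt))).mul
      (isUnit_diagonal.2 <| Pi.isUnit_iff.2 fun i =>
        (Real.sqrt_pos.2 (Real.sqrt_pos.2 (he i))).ne'.isUnit)
  · rw [hSt, ← hDD]
    simp only [Matrix.mul_assoc, nonsing_inv_mul_cancel_left _ _ hLdet,
      mul_nonsing_inv_cancel_left _ _ hLdet, hUtU']
  · calc L⁻¹ * U * D * diagonal (fun i => √(e i)) * (L⁻¹ * U * D)ᵀ
        = L⁻¹ * (U * diagonal e * Uᵀ) * L⁻¹ := by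
          rw [hSt, ← hDD, ← hDDDD]
          simp only [Matrix.mul_assoc]
      _ = B := by
          rw [← hTU]
          simp only [Matrix.mul_assoc, nonsing_inv_mul_cancel_left _ _ hLdet,
            mul_nonsing_inv_cancel_right _ _ hLdet]

end Matrix

lemma fromBlocks_inv_transpose_preserves_symplecticForm {n : ℕ} {S : Matrix (Fin n) (Fin n) ℝ}
    (hS : IsUnit S) :
    (fromBlocks S 0 0 (Sᵀ)⁻¹)ᵀ * symplecticForm n * fromBlocks S 0 0 (Sᵀ)⁻¹ =
      symplecticForm n := by
  have hSdet := (isUnit_iff_isUnit_det S).1 hS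
  have hStdet : IsUnit Sᵀ.det := by rwa [det_transpose]
  simp [symplecticForm, fromBlocks_transpose, fromBlocks_multiply, transpose_nonsing_inv,
    mul_nonsing_inv _ hStdet, nonsing_inv_mul _ hSdet]

/-- **Block-diagonal Williamson theorem**: if `M = diag(A, B)` is positive definite, the
symplectic matrix in Williamson's theorem can be chosen block diagonal, of the form
`S = diag(Sₙ, (Sₙᵀ)⁻¹)` with `Sₙ` invertible. -/
theorem williamson_blockDiagonal (n : ℕ) (A B : Matrix (Fin n) (Fin n) ℝ)
    (M : Matrix (Fin n ⊕ Fin n) (Fin n ⊕ Fin n) ℝ)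
    (hMdef : M = Matrix.fromBlocks A 0 0 B) (hM : M.PosDef) :
    ∃ (Sn : Matrix (Fin n) (Fin n) ℝ) (Λ : Matrix (Fin n) (Fin n) ℝ),
      IsUnit Sn ∧ Λ.IsDiag ∧ (∀ i, 0 < Λ i i) ∧
      (Matrix.fromBlocks Sn 0 0 ((Snᵀ)⁻¹))ᵀ * symplecticForm n *
        Matrix.fromBlocks Sn 0 0 ((Snᵀ)⁻¹) = symplecticForm n ∧
      (Matrix.fromBlocks Sn 0 0 ((Snᵀ)⁻¹))ᵀ * M * Matrix.fromBlocks Sn 0 0 ((Snᵀ)⁻¹) =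
        Matrix.fromBlocks Λ 0 0 Λ := by
  subst hMdef
  have hA : A.PosDef := by simpa using hM.toBlocks₁₁
  have hB : B.PosDef := by simpa using hM.toBlocks₂₂
  obtain ⟨S, μ, hS, hμ, hSA, hSB⟩ := hA.exists_simultaneous_diagonalization hB
  have hStdet : IsUnit Sᵀ.det := by rwa [det_transpose, ← isUnit_iff_isUnit_det]
  refine ⟨S, diagonal μ, hS, isDiag_diagonal μ, by simpa using hμ,
    fromBlocks_inv_transpose_preserves_symplecticForm hS, ?_⟩
  rw [fromBlocks_transpose_mul_fromBlocks_mul_fromBlocks, transpose_nonsing_inv,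
    transpose_transpose, hSA, ← hSB]
  simp only [Matrix.mul_assoc, mul_nonsing_inv _ hStdet, Matrix.mul_one,
    nonsing_inv_mul_cancel_left _ _ ((isUnit_iff_isUnit_det S).1 hS)]
end
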